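/- arXiv:1505.03738 — 2 statements merged into one kernel-verified Lean document; each statement's English description precedes it below -/
import Mathlib

section
/- For every condensed reaction (Â, B̂) of the condensed reaction network, there exist resting complexes a_1, a_2 with {SCC(a_1), SCC(a_2)} = Â and a slow reaction ({a_1, a_2}, P) in R such that for every finite multiset B of complexes with B ~ B̂ there is a fast transition from P to B; consequently, for every such B there is a resting-state transition from {a_1, a_2} to B. -/
/-- A reaction: a pair (reactants, products) of finite multisets of complexes. -/
abbrev Rxn (C : Type*) := Multiset C × Multiset C

variable {C : Type*}

/-- Edge of the fast-reaction digraph Γ: a fast (1,1) reaction ({x}, {y}) in R. -/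
def FastEdge (R : Set (Rxn C)) (x y : C) : Prop :=
  ((({x} : Multiset C), ({y} : Multiset C)) : Rxn C) ∈ R

/-- Reachability along Γ. -/
def Reach (R : Set (Rxn C)) : C → C → Prop :=
  Relation.ReflTransGen (FastEdge R)

/-- The strongly connected component of Γ containing x. -/
def scc (R : Set (Rxn C)) (x : C) : Set C :=
  {y | Reach R x y ∧ Reach R y x}

/-- Q is a resting set: an SCC of Γ all of whose outgoing fast reactions stay in Q. -/
def IsRestingSet (R : Set (Rxn C)) (Q : Set C) : Prop :=
  (∃ x, Q = scc R x) ∧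
    ∀ r ∈ R, r.1.card = 1 → (∀ a ∈ r.1, a ∈ Q) → ∀ b ∈ r.2, b ∈ Q

/-- x is a resting complex: a member of some resting set. -/
def RestingComplex (R : Set (Rxn C)) (x : C) : Prop :=
  ∃ Q, IsRestingSet R Q ∧ x ∈ Q

/-- One step of a fast transition: replace one occurrence of x by the products of a
fast reaction ({x}, P) ∈ R. -/
def FastStep (R : Set (Rxn C)) (M N : Multiset C) : Prop :=
  ∃ (x : C) (P M' : Multiset C),
    ((({x} : Multiset C), P) : Rxn C) ∈ R ∧ M = x ::ₘ M' ∧ N = P + M'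

/-- A fast transition: finitely many fast steps. -/
def FastTransition (R : Set (Rxn C)) : Multiset C → Multiset C → Prop :=
  Relation.ReflTransGen (FastStep R)

/-- The fate predicate Fate(x, F), for x a complex and F a finite multiset of resting sets. -/
inductive Fate (R : Set (Rxn C)) : C → Multiset (Set C) → Prop
  | resting (x : C) (h : IsRestingSet R (scc R x)) :
      Fate R x {scc R x}
  | step (x a : C) (l : List (C × Multiset (Set C)))
      (hnr : ¬ IsRestingSet R (scc R x))
      (ha : a ∈ scc R x)
      (hr : ((({a} : Multiset C), (↑(l.map Prod.fst) : Multiset C)) : Rxn C) ∈ R)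
      (hout : ∃ b ∈ l.map Prod.fst, b ∉ scc R x)
      (hf : ∀ p ∈ l, Fate R p.1 p.2) :
      Fate R x (l.map Prod.snd).sum

/-- B ~ F : the multiset B of complexes represents the multiset F of resting sets,
i.e. there is a bijective matching pairing each b ∈ B with a Q ∈ F with b ∈ Q. -/
def Represents (B : Multiset C) (F : Multiset (Set C)) : Prop :=
  Multiset.Rel (fun b Q => b ∈ Q) B F

/-- F is a fate of the multiset P of complexes: F = F_1 + ... + F_n where
P = {b_1, ..., b_n} and Fate(b_i, F_i) for each i. -/
def FateM (R : Set (Rxn C)) (P : Multiset C) (F : Multiset (Set C)) : Prop :=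
  ∃ l : List (C × Multiset (Set C)),
    P = (↑(l.map Prod.fst) : Multiset C) ∧
    F = (l.map Prod.snd).sum ∧
    ∀ p ∈ l, Fate R p.1 p.2

/-- The condensed reactions: for each slow reaction ({a₁, a₂}, P) ∈ R and each fate F
of P, the condensed reaction ({SCC(a₁), SCC(a₂)}, F). -/
def IsCondensed (R : Set (Rxn C)) (Ahat Bhat : Multiset (Set C)) : Prop :=
  ∃ (a1 a2 : C) (P : Multiset C),
    ((({a1, a2} : Multiset C), P) : Rxn C) ∈ R ∧
    Ahat = ({scc R a1, scc R a2} : Multiset (Set C)) ∧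
    FateM R P Bhat

/-- Every reaction in R is fast (unimolecular) or slow (bimolecular). -/
def FastOrSlow (R : Set (Rxn C)) : Prop :=
  ∀ r ∈ R, r.1.card = 1 ∨ r.1.card = 2

/-- Reactants and products of every reaction are nonempty. -/
def NonemptyRxns (R : Set (Rxn C)) : Prop :=
  ∀ r ∈ R, r.1 ≠ 0 ∧ r.2 ≠ 0

/-- Property 3: every finite cyclic sequence of fast reactions, in which each reaction
consumes a product of the previous one (cyclically), consists of (1,1) reactions only. -/
def Prop3 (R : Set (Rxn C)) : Prop :=
  ∀ (n : ℕ) (hn : 0 < n) (r : Fin n → Rxn C),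
    (∀ i, r i ∈ R ∧ (r i).1.card = 1) →
    (∀ i : Fin n, ∀ a ∈ (r ⟨(i.1 + 1) % n, Nat.mod_lt _ hn⟩).1, a ∈ (r i).2) →
    ∀ i, (r i).2.card = 1

/-- Property 4: both reactants of every slow reaction are resting complexes. -/
def Prop4 (R : Set (Rxn C)) : Prop :=
  ∀ r ∈ R, r.1.card = 2 → ∀ a ∈ r.1, RestingComplex R a

/-- A resting-state transition from {a₁, a₂} to B: a slow reaction ({a₁, a₂}, P) ∈ R
followed by a fast transition from P to B. -/
def RestingTransition (R : Set (Rxn C)) (a1 a2 : C) (B : Multiset C) : Prop :=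
  ∃ P : Multiset C, ((({a1, a2} : Multiset C), P) : Rxn C) ∈ R ∧ FastTransition R P B

/-- One step of a sequence of detailed reactions: remove the reactants of some
reaction in R from the current multiset and add its products. -/
def DetailedStep (R : Set (Rxn C)) (M N : Multiset C) : Prop :=
  ∃ r ∈ R, ∃ M' : Multiset C, M = r.1 + M' ∧ N = r.2 + M'

/-- One step of a sequence of condensed reactions: remove the reactant multiset of a
condensed reaction from the current multiset of resting sets and add its products. -/
def CondensedStep (R : Set (Rxn C)) (M N : Multiset (Set C)) : Prop :=
  ∃ Ahat Bhat M' : Multiset (Set C),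
    IsCondensed R Ahat Bhat ∧ M = Ahat + M' ∧ N = Bhat + M'

/-! A fate of a complex records which resting sets its fast decay can end in: unwinding the
inductive definition, each `Fate.step` is a walk inside the SCC followed by one fast
reaction leaving it, and each `Fate.resting` a walk inside a resting SCC to the chosen
representative. Fast transitions of disjoint parts of a multiset run in parallel, so a fate of
the products of a slow reaction is realised by a fast transition to any of its representatives. -/

theorem FastStep.add_right {R : Set (Rxn C)} {M N : Multiset C} (K : Multiset C)
    (h : FastStep R M N) : FastStep R (M + K) (N + K) := by
  obtain ⟨x, P, M', hr, rfl, rfl⟩ := h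
  exact ⟨x, P, M' + K, hr, Multiset.cons_add x M' K, add_assoc P M' K⟩

namespace FastTransition

variable {R : Set (Rxn C)}

theorem add_right {M N : Multiset C} (K : Multiset C) (h : FastTransition R M N) :
    FastTransition R (M + K) (N + K) :=
  h.lift (· + K) fun _ _ => FastStep.add_right K

theorem add {M M' N N' : Multiset C} (hM : FastTransition R M M') (hN : FastTransition R N N') :
    FastTransition R (M + N) (M' + N') := by
  refine (hM.add_right N).trans ?_
  rw [add_comm M' N, add_comm M' N']
  exact hN.add_right M'

theorem of_reach {x y : C} (h : Reach R x y) : FastTransition R {x} {y} :=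
  h.lift (fun z : C => ({z} : Multiset C)) fun a b hab =>
    (⟨a, {b}, 0, hab, rfl, (add_zero _).symm⟩ : FastStep R {a} {b})

theorem of_forall_represents_sum {l : List (C × Multiset (Set C))}
    (hl : ∀ p ∈ l, ∀ B, Represents B p.2 → FastTransition R {p.1} B) :
    ∀ B, Represents B (l.map Prod.snd).sum → FastTransition R (l.map Prod.fst : Multiset C) B := by
  induction l with
  | nil =>
    intro B hB
    rw [List.map_nil, List.sum_nil, Represents, Multiset.rel_zero_right] at hB
    exact hB ▸ Relation.ReflTransGen.refl
  | cons p t ih =>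
    intro B hB
    rw [List.map_cons, List.sum_cons, Represents, Multiset.rel_add_right] at hB
    obtain ⟨B₁, B₂, hB₁, hB₂, rfl⟩ := hB
    have hp := hl p List.mem_cons_self B₁ hB₁
    have ht := ih (fun q hq => hl q (List.mem_cons_of_mem p hq)) B₂ hB₂
    simpa using hp.add ht

end FastTransition

theorem Fate.fastTransition {R : Set (Rxn C)} {x : C} {F : Multiset (Set C)} (h : Fate R x F)
    {B : Multiset C} (hB : Represents B F) : FastTransition R {x} B := by
  induction h generalizing B with
  | resting x _ =>
    obtain ⟨b, B', hb, hB', rfl⟩ := Multiset.rel_cons_right.mp hB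
    rw [Multiset.rel_zero_right.mp hB']
    exact FastTransition.of_reach hb.1
  | step x a l _ ha hr _ _ ih =>
    have hleave : FastStep R {a} (l.map Prod.fst : Multiset C) :=
      ⟨a, _, 0, hr, rfl, (add_zero _).symm⟩
    exact ((FastTransition.of_reach ha.1).tail hleave).trans
      (FastTransition.of_forall_represents_sum (fun p hp _ => ih p hp) B hB)

theorem FateM.fastTransition {R : Set (Rxn C)} {P : Multiset C} {F : Multiset (Set C)}
    (h : FateM R P F) {B : Multiset C} (hB : Represents B F) : FastTransition R P B := by
  obtain ⟨l, rfl, rfl, hl⟩ := h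
  exact FastTransition.of_forall_represents_sum (fun p hp _ => (hl p hp).fastTransition) B hB

theorem Prop4.restingComplex_reactants {R : Set (Rxn C)} (h4 : Prop4 R) {a₁ a₂ : C}
    {P : Multiset C} (hr : ((({a₁, a₂} : Multiset C), P) : Rxn C) ∈ R) :
    RestingComplex R a₁ ∧ RestingComplex R a₂ :=
  ⟨h4 _ hr rfl a₁ (by simp), h4 _ hr rfl a₂ (by simp)⟩

theorem condensed_to_detailed_general {C : Type*} (R : Set (Rxn C))
    (h4 : Prop4 R)
    (Ahat Bhat : Multiset (Set C)) (h : IsCondensed R Ahat Bhat) :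
    ∃ (a1 a2 : C) (P : Multiset C),
      RestingComplex R a1 ∧ RestingComplex R a2 ∧
      ({scc R a1, scc R a2} : Multiset (Set C)) = Ahat ∧
      ((({a1, a2} : Multiset C), P) : Rxn C) ∈ R ∧
      (∀ B : Multiset C, Represents B Bhat → FastTransition R P B) ∧
      (∀ B : Multiset C, Represents B Bhat → RestingTransition R a1 a2 B) := by
  obtain ⟨a1, a2, P, hr, rfl, hfate⟩ := h
  obtain ⟨hrest1, hrest2⟩ := h4.restingComplex_reactants hr
  exact ⟨a1, a2, P, hrest1, hrest2, rfl, hr, fun _ hB => hfate.fastTransition hB,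
    fun _ hB => ⟨P, hr, hfate.fastTransition hB⟩⟩

/-- Theorem 1 (Condensed reactions map to detailed reactions). -/
theorem condensed_to_detailed {C : Type*} [Fintype C] (R : Set (Rxn C))
    (hRfin : R.Finite) (hne : NonemptyRxns R) (hfs : FastOrSlow R) (h4 : Prop4 R)
    (Ahat Bhat : Multiset (Set C)) (h : IsCondensed R Ahat Bhat) :
    ∃ (a1 a2 : C) (P : Multiset C),
      RestingComplex R a1 ∧ RestingComplex R a2 ∧
      ({scc R a1, scc R a2} : Multiset (Set C)) = Ahat ∧
      ((({a1, a2} : Multiset C), P) : Rxn C) ∈ R ∧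
      (∀ B : Multiset C, Represents B Bhat → FastTransition R P B) ∧
      (∀ B : Multiset C, Represents B Bhat → RestingTransition R a1 a2 B) :=
  condensed_to_detailed_general R h4 Ahat Bhat h
end

section
/- Assume Properties 3 and 4. For every resting-state transition from a multiset A = {a_1, a_2} of resting complexes to a multiset B of resting complexes, there exists a condensed reaction (Â, B̂) of the condensed reaction network such that A ~ Â and B ~ B̂ (in particular Â = {SCC(a_1), SCC(a_2)}). -/
variable {C : Type*}

/-!
Follow the fast transition `P →* B` backwards. Each intermediate multiset `M` carries one fate
per complex, and `B` represents the sum of these fates: at `B` every complex is resting and has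
the trivial fate, and a fast step `x ↦ P` pulls the fates of `P` back to a fate of `x`. Either a
product of that step leaves `SCC(x)`, so `SCC(x)` is not resting and the second clause of `Fate`
applies, or all products lie in `SCC(x)` and reach `x`; then Property 3 makes the step a (1,1)
reaction inside `SCC(x)`, and `x` inherits the fate of its single product.
-/

theorem Relation.ReflTransGen.exists_path {α : Type*} {r : α → α → Prop} {a b : α}
    (h : Relation.ReflTransGen r a b) :
    ∃ (n : ℕ) (f : ℕ → α), f 0 = a ∧ f n = b ∧ ∀ i < n, r (f i) (f (i + 1)) := by
  induction h with
  | refl => exact ⟨0, fun _ => a, rfl, rfl, by simp⟩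
  | @tail c d _ hcd ih =>
    obtain ⟨n, f, hf0, hfn, hf⟩ := ih
    refine ⟨n + 1, fun i => if i ≤ n then f i else d, by simp [hf0], by simp, fun i hi => ?_⟩
    rcases Nat.lt_or_ge i n with hin | hin
    · simpa [hin.le, Nat.succ_le_of_lt hin] using hf i hin
    · obtain rfl : i = n := by omega
      simpa [hfn] using hcd

section ReactionNetwork

variable {R : Set (Rxn C)}

theorem mem_scc_self (R : Set (Rxn C)) (x : C) : x ∈ scc R x :=
  ⟨.refl, .refl⟩

theorem scc_eq_scc_of_mem {x y : C} (h : y ∈ scc R x) : scc R x = scc R y := by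
  obtain ⟨hxy, hyx⟩ := h
  ext z
  exact ⟨fun h => ⟨hyx.trans h.1, h.2.trans hxy⟩,
    fun h => ⟨hxy.trans h.1, h.2.trans hyx⟩⟩

theorem RestingComplex.isRestingSet_scc {x : C} (h : RestingComplex R x) :
    IsRestingSet R (scc R x) := by
  obtain ⟨_, ⟨⟨x₀, rfl⟩, hclosed⟩, hx⟩ := h
  rw [← scc_eq_scc_of_mem hx]
  exact ⟨⟨x₀, rfl⟩, hclosed⟩

theorem Fate.congr_scc {x x' : C} (h : scc R x = scc R x') {F : Multiset (Set C)}
    (hF : Fate R x F) : Fate R x' F := by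
  cases hF with
  | resting _ hres => exact h ▸ Fate.resting x' (h ▸ hres)
  | step _ a l hnr ha hr hout hl => exact Fate.step x' a l (h ▸ hnr) (h ▸ ha) hr (h ▸ hout) hl

/- The path `y = v 0 → ⋯ → v k = a` closes, through the reaction `({a}, P)`, into a cycle of
fast reactions, to which Property 3 applies. -/
theorem card_products_eq_one_of_reach (h3 : Prop3 R) {a y : C} {P : Multiset C}
    (hr : ((({a} : Multiset C), P) : Rxn C) ∈ R) (hy : y ∈ P) (hya : Reach R y a) :
    Multiset.card P = 1 := by
  obtain ⟨k, v, hv0, hvk, hedge⟩ := Relation.ReflTransGen.exists_path hya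
  let r : Fin (k + 1) → Rxn C := fun i =>
    (({v i} : Multiset C), if (i : ℕ) < k then ({v (i + 1)} : Multiset C) else P)
  have hmem : ∀ i, r i ∈ R ∧ (r i).1.card = 1 := fun i => by
    refine ⟨?_, by simp [r]⟩
    by_cases hi : (i : ℕ) < k
    · simp only [r, hi, if_true]
      exact hedge i hi
    · have hik : (i : ℕ) = k := by omega
      simpa [r, hik, hvk] using hr
  have hchain : ∀ i : Fin (k + 1),
      ∀ c ∈ (r ⟨(i.1 + 1) % (k + 1), Nat.mod_lt _ k.succ_pos⟩).1, c ∈ (r i).2 := by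
    rintro ⟨i, hi⟩ c hc
    simp only [r, Multiset.mem_singleton] at hc
    subst hc
    by_cases hik : i < k
    · simp [r, hik, Nat.mod_eq_of_lt (Nat.succ_lt_succ hik)]
    · obtain rfl : i = k := by omega
      simpa [r, hv0] using hy
  simpa [r] using h3 (k + 1) k.succ_pos r hmem hchain ⟨k, k.lt_succ_self⟩

theorem exists_eq_singleton_of_products_subset_scc (hne : NonemptyRxns R) (h3 : Prop3 R)
    {x : C} {P : Multiset C} (hr : ((({x} : Multiset C), P) : Rxn C) ∈ R)
    (hP : ∀ b ∈ P, b ∈ scc R x) : ∃ p, P = {p} ∧ p ∈ scc R x := by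
  obtain ⟨p, hp⟩ := Multiset.exists_mem_of_ne_zero (hne _ hr).2
  obtain ⟨q, rfl⟩ :=
    Multiset.card_eq_one.mp (card_products_eq_one_of_reach h3 hr hp (hP p hp).2)
  obtain rfl := Multiset.mem_singleton.mp hp
  exact ⟨p, rfl, hP p hp⟩

theorem FateM.of_rel {P : Multiset C} {Fs : Multiset (Multiset (Set C))}
    (h : Multiset.Rel (Fate R) P Fs) : FateM R P Fs.sum := by
  induction h with
  | zero => exact ⟨[], rfl, rfl, by simp⟩
  | @cons a F _ _ haF _ ih =>
    obtain ⟨l, rfl, hsum, hl⟩ := ih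
    refine ⟨(a, F) :: l, by simp, by simp [hsum], ?_⟩
    rintro p (_ | ⟨_, hp⟩)
    exacts [haF, hl p hp]

theorem Fate.of_fastReaction (hne : NonemptyRxns R) (h3 : Prop3 R) {x : C} {P : Multiset C}
    {Fs : Multiset (Multiset (Set C))} (hr : ((({x} : Multiset C), P) : Rxn C) ∈ R)
    (hP : Multiset.Rel (Fate R) P Fs) : Fate R x Fs.sum := by
  by_cases hout : ∃ b ∈ P, b ∉ scc R x
  · have hnr : ¬ IsRestingSet R (scc R x) := fun hres => by
      obtain ⟨b, hb, hbx⟩ := hout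
      exact hbx (hres.2 _ hr (by simp) (by simpa using mem_scc_self R x) b hb)
    obtain ⟨l, rfl, hsum, hl⟩ := FateM.of_rel hP
    rw [hsum]
    exact Fate.step x x l hnr (mem_scc_self R x) hr (by simpa using hout) hl
  · push Not at hout
    obtain ⟨p, rfl, hp⟩ := exists_eq_singleton_of_products_subset_scc hne h3 hr hout
    obtain ⟨G, _, hG, hrest, rfl⟩ := Multiset.rel_cons_left.mp hP
    obtain rfl := Multiset.rel_zero_left.mp hrest
    simpa using hG.congr_scc (scc_eq_scc_of_mem hp).symm

theorem exists_rel_fate_of_fastTransition (hne : NonemptyRxns R) (h3 : Prop3 R)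
    {M B : Multiset C} (h : FastTransition R M B) (hB : ∀ b ∈ B, RestingComplex R b) :
    ∃ Fs, Multiset.Rel (Fate R) M Fs ∧ Represents B Fs.sum := by
  induction h using Relation.ReflTransGen.head_induction_on with
  | refl =>
    refine ⟨B.map fun b => {scc R b}, ?_, ?_⟩
    · exact Multiset.rel_map_right.mpr <| Multiset.rel_refl_of_refl_on fun b hb =>
        Fate.resting b (hB b hb).isRestingSet_scc
    · have hsum : (B.map fun b => ({scc R b} : Multiset (Set C))).sum = B.map (scc R) := by
        simpa [Multiset.map_map] using Multiset.sum_map_singleton (B.map (scc R))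
      rw [hsum]
      exact Multiset.rel_map_right.mpr <| Multiset.rel_refl_of_refl_on fun b _ => mem_scc_self R b
  | head hstep _ ih =>
    obtain ⟨Fs, hrel, hrep⟩ := ih
    obtain ⟨x, P, M', hr, rfl, rfl⟩ := hstep
    obtain ⟨FsP, FsM', hP, hM', rfl⟩ := Multiset.rel_add_left.mp hrel
    refine ⟨FsP.sum ::ₘ FsM', hM'.cons (Fate.of_fastReaction hne h3 hr hP), ?_⟩
    simpa using hrep

end ReactionNetwork

theorem detailed_to_condensed_general {C : Type*} (R : Set (Rxn C))
    (hne : NonemptyRxns R)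
    (h3 : Prop3 R)
    (a1 a2 : C)
    (B : Multiset C) (hB : ∀ b ∈ B, RestingComplex R b)
    (hT : RestingTransition R a1 a2 B) :
    ∃ Ahat Bhat : Multiset (Set C),
      IsCondensed R Ahat Bhat ∧
      Ahat = ({scc R a1, scc R a2} : Multiset (Set C)) ∧
      Represents ({a1, a2} : Multiset C) Ahat ∧
      Represents B Bhat := by
  obtain ⟨P, hslow, hfast⟩ := hT
  obtain ⟨Fs, hfate, hrep⟩ := exists_rel_fate_of_fastTransition hne h3 hfast hB
  refine ⟨{scc R a1, scc R a2}, Fs.sum, ⟨a1, a2, P, hslow, rfl, FateM.of_rel hfate⟩, rfl, ?_,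
    hrep⟩
  exact .cons (mem_scc_self R a1) (.cons (mem_scc_self R a2) .zero)

/-- Theorem 2 (Detailed reactions map to condensed reactions). -/
theorem detailed_to_condensed {C : Type*} [Fintype C] (R : Set (Rxn C))
    (hRfin : R.Finite) (hne : NonemptyRxns R) (hfs : FastOrSlow R)
    (h3 : Prop3 R) (h4 : Prop4 R)
    (a1 a2 : C) (ha1 : RestingComplex R a1) (ha2 : RestingComplex R a2)
    (B : Multiset C) (hB : ∀ b ∈ B, RestingComplex R b)
    (hT : RestingTransition R a1 a2 B) :
    ∃ Ahat Bhat : Multiset (Set C),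
      IsCondensed R Ahat Bhat ∧
      Ahat = ({scc R a1, scc R a2} : Multiset (Set C)) ∧
      Represents ({a1, a2} : Multiset C) Ahat ∧
      Represents B Bhat :=
  detailed_to_condensed_general R hne h3 a1 a2 B hB hT
end
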